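/- The independence model induced by c-separation on a CDAG satisfies the contraction axiom: for disjoint node sets A, B, C, D, if A is c-separated from B by C ∪ D and A is c-separated from D by C, then A is c-separated from B ∪ D by C. -/

import Mathlib

open Relation

/-- Ancestors of a set `S` under directed edge relation `D`:
vertices with a (possibly trivial) directed path to some vertex of `S`. -/
def Ancestors {a : Type*} (D : a -> a -> Prop) (S : Set a) : Set a :=
  {u | exists s, s ∈ S ∧ Relation.ReflTransGen D u s}

/-- `C` separates `A` and `B` in the undirected graph `U`. -/
def Separates {a : Type*} (U : SimpleGraph a) (A B C : Set a) : Prop :=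
  ∀ x, x ∈ A → ∀ y, y ∈ B → ∀ p : U.Walk x y, ∃ c, c ∈ C ∧ c ∈ p.support

/-- Skeleton of the moralisation of the subgraph of `D` induced on `T`. -/
def MoralSkel {a : Type*} (D : a -> a -> Prop) (T : Set a) : SimpleGraph a :=
  SimpleGraph.fromRel (fun x y =>
    x ∈ T ∧ y ∈ T ∧ (D x y ∨ D y x ∨ ∃ z, z ∈ T ∧ D x z ∧ D y z))

/-- Classical d-separation in the DAG with edge relation `D`. -/
def DSep {a : Type*} (D : a -> a -> Prop) (A B C : Set a) : Prop :=
  Separates (MoralSkel D (Ancestors D (A ∪ B ∪ C))) A B C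

/-- Nodes of a CDAG: `Sum.inl i` is the primary node `v i`,
`Sum.inr i` is the secondary node `w i`. -/
abbrev CNode (p : ℕ) := Fin p ⊕ Fin p

/-- Edge relation of the CDAG built from a DAG `E` on primary nodes:
the edges of `E` together with `w i → v i`. -/
def cdagEdge {p : ℕ} (E : Fin p -> Fin p -> Prop) : CNode p -> CNode p -> Prop
  | Sum.inl i, Sum.inl j => E i j
  | Sum.inr i, Sum.inl j => i = j
  | _, _ => False

/-- The undirected graph used for c-separation, given ancestral set `T`:
moralised skeleton plus an edge between every pair of secondary nodes present. -/
def CSepGraph {p : ℕ} (E : Fin p -> Fin p -> Prop) (T : Set (CNode p)) :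
    SimpleGraph (CNode p) :=
  SimpleGraph.fromRel (fun x y =>
    x ∈ T ∧ y ∈ T ∧ (cdagEdge E x y ∨ cdagEdge E y x ∨
      (∃ z, z ∈ T ∧ cdagEdge E x z ∧ cdagEdge E y z) ∨
      (x.isRight = true ∧ y.isRight = true)))

/-- c-separation of `A` and `B` by `C` in the CDAG built from `E`. -/
def CSep {p : ℕ} (E : Fin p -> Fin p -> Prop) (A B C : Set (CNode p)) : Prop :=
  Separates (CSepGraph E (Ancestors (cdagEdge E) (A ∪ B ∪ C))) A B C

/-! A walk from `A` to `B ∪ D` avoiding `C` is followed edge by edge. While it has avoided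
`C ∪ D`, every edge it takes already lies in the c-separation graph of the smaller ancestral set
of `A ∪ D ∪ C`: otherwise the edge reaches, directly or through a common child, a vertex that is
an ancestor of `B` alone, and the directed path from it down to `B` yields a walk from `A` to `B`
avoiding `C ∪ D`. Hence the walk either reaches `B` avoiding `C ∪ D`, or first enters `D`
along a walk of the smaller graph avoiding `C`; each contradicts one hypothesis. -/

open SimpleGraph

theorem Separates.contraction_of_le {V : Type*} {G₁ G₂ : SimpleGraph V} {A B C D : Set V}
    (hle : G₂ ≤ G₁) (hAC : Disjoint A C) (hAD : Disjoint A D)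
    (h1 : Separates G₁ A B (C ∪ D)) (h2 : Separates G₂ A D C)
    (hadj : ∀ x ∈ A, ∀ {a b : V} (q : G₁.Walk x a), (∀ v ∈ q.support, v ∉ C ∪ D) →
      G₁.Adj a b → G₂.Adj a b) :
    Separates G₁ A (B ∪ D) C := by
  intro x hx y hy w
  by_contra! hw
  suffices key : ∀ {a y} (w : G₁.Walk a y), y ∈ B ∪ D → (∀ v ∈ w.support, v ∉ C) →
      ∀ q : G₂.Walk x a, (∀ v ∈ q.support, v ∉ C ∪ D) → False by
    refine key w hy (fun v hv hvC => hw v hvC hv) Walk.nil ?_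
    simp only [Walk.support_nil, List.mem_singleton, forall_eq]
    exact Set.disjoint_union_right.mpr ⟨hAC, hAD⟩ |>.notMem_of_mem_left hx
  clear hw w hy y
  intro a y w hy
  induction w with
  | nil =>
    intro _ q hq
    have hyB : _ ∈ B := hy.resolve_right fun hyD => hq _ q.end_mem_support (Or.inr hyD)
    obtain ⟨c, hc, hcq⟩ := h1 x hx _ hyB (q.mapLe hle)
    exact hq c (by simpa using hcq) hc
  | @cons a b _ hab w ih =>
    intro hw q hq
    have hab₂ : G₂.Adj a b := hadj x hx (q.mapLe hle) (by simpa using hq) hab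
    have hq' : ∀ v ∈ (q.concat hab₂).support, v ∉ C := by
      simp only [Walk.support_concat, List.mem_append, List.mem_singleton]
      rintro v (hv | rfl)
      exacts [fun hvC => hq v hv (Or.inl hvC), hw _ (by simp)]
    by_cases hbD : b ∈ D
    · obtain ⟨c, hc, hcq⟩ := h2 x hx b hbD (q.concat hab₂)
      exact hq' c hcq hc
    · refine ih hy (fun v hv => hw v (by simp [hv])) (q.concat hab₂) ?_
      intro v hv hvCD
      simp only [Walk.support_concat, List.mem_append, List.mem_singleton] at hv
      obtain hv | rfl := hv
      exacts [hq v hv hvCD, hvCD.elim (hq' _ (by simp)) hbD]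

section Ancestors

variable {α : Type*} {R : α → α → Prop}

theorem subset_ancestors (S : Set α) : S ⊆ Ancestors R S :=
  fun v hv => ⟨v, hv, .refl⟩

theorem ancestors_mono {S S' : Set α} (h : S ⊆ S') : Ancestors R S ⊆ Ancestors R S' :=
  fun _ ⟨s, hs, hus⟩ => ⟨s, h hs, hus⟩

theorem mem_ancestors_of_reflTransGen {S : Set α} {u v : α} (huv : ReflTransGen R u v)
    (hv : v ∈ Ancestors R S) : u ∈ Ancestors R S :=
  let ⟨s, hs, hvs⟩ := hv
  ⟨s, hs, huv.trans hvs⟩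

end Ancestors

section CSepGraph

variable {p : ℕ} {E : Fin p → Fin p → Prop} {T T' : Set (CNode p)} {x y : CNode p}

theorem cdagEdge_irrefl (hE : ∀ i, ¬ E i i) (x : CNode p) : ¬ cdagEdge E x x := by
  cases x with
  | inl i => exact hE i
  | inr i => exact id

theorem csepGraph_adj_iff : (CSepGraph E T).Adj x y ↔ x ≠ y ∧ x ∈ T ∧ y ∈ T ∧
    (cdagEdge E x y ∨ cdagEdge E y x ∨ (∃ z ∈ T, cdagEdge E x z ∧ cdagEdge E y z) ∨
      (x.isRight = true ∧ y.isRight = true)) := by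
  simp only [CSepGraph, fromRel_adj]
  constructor
  · rintro ⟨hne, h | ⟨hy, hx, h⟩⟩
    · exact ⟨hne, h⟩
    · refine ⟨hne, hx, hy, ?_⟩
      rcases h with h | h | ⟨z, hz, hyz, hxz⟩ | ⟨hy, hx⟩
      exacts [.inr (.inl h), .inl h, .inr (.inr (.inl ⟨z, hz, hxz, hyz⟩)),
        .inr (.inr (.inr ⟨hx, hy⟩))]
  · exact fun ⟨hne, h⟩ => ⟨hne, .inl h⟩

theorem csepGraph_mono (h : T ⊆ T') : CSepGraph E T ≤ CSepGraph E T' := by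
  intro x y hxy
  rw [csepGraph_adj_iff] at hxy ⊢
  obtain ⟨hne, hx, hy, hr⟩ := hxy
  refine ⟨hne, h hx, h hy, ?_⟩
  rcases hr with hr | hr | ⟨z, hz, hxz, hyz⟩ | hr
  exacts [.inl hr, .inr (.inl hr), .inr (.inr (.inl ⟨z, h hz, hxz, hyz⟩)),
    .inr (.inr (.inr hr))]

theorem csepGraph_adj_of_cdagEdge (hE : ∀ i, ¬ E i i) (hx : x ∈ T) (hy : y ∈ T)
    (hxy : cdagEdge E x y) : (CSepGraph E T).Adj x y := by
  refine csepGraph_adj_iff.mpr ⟨?_, hx, hy, .inl hxy⟩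
  rintro rfl
  exact cdagEdge_irrefl hE x hxy

theorem exists_csepGraph_walk_of_reflTransGen (hE : ∀ i, ¬ E i i) {S : Set (CNode p)}
    {u s : CNode p} (hus : ReflTransGen (cdagEdge E) u s) (hs : s ∈ S) :
    ∃ q : (CSepGraph E (Ancestors (cdagEdge E) S)).Walk u s,
      ∀ v ∈ q.support, ReflTransGen (cdagEdge E) u v := by
  induction hus using ReflTransGen.head_induction_on with
  | refl => exact ⟨.nil, by simp [ReflTransGen.refl]⟩
  | @head u v huv hvs ih =>
    obtain ⟨q, hq⟩ := ih
    have hvS : v ∈ Ancestors (cdagEdge E) S := ⟨s, hs, hvs⟩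
    have huS : u ∈ Ancestors (cdagEdge E) S := mem_ancestors_of_reflTransGen (.single huv) hvS
    refine ⟨.cons (csepGraph_adj_of_cdagEdge hE huS hvS huv) q, ?_⟩
    simp only [Walk.support_cons, List.mem_cons, forall_eq_or_imp]
    exact ⟨.refl, fun w hw => .head huv (hq w hw)⟩

theorem exists_escape_of_adj_of_not_adj (hE : ∀ i, ¬ E i i) {a b : CNode p}
    (h : (CSepGraph E T').Adj a b) (hn : ¬ (CSepGraph E T).Adj a b) :
    ∃ u ∈ T', u ∉ T ∧ (u = a ∨ (CSepGraph E T').Adj a u) := by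
  obtain ⟨hne, ha, hb, hr⟩ := csepGraph_adj_iff.mp h
  by_cases haT : a ∈ T
  swap
  · exact ⟨a, ha, haT, .inl rfl⟩
  by_cases hbT : b ∈ T
  swap
  · exact ⟨b, hb, hbT, .inr h⟩
  have hn' := fun h => hn (csepGraph_adj_iff.mpr ⟨hne, haT, hbT, h⟩)
  rcases hr with hr | hr | ⟨z, hz, haz, hbz⟩ | hr
  · exact (hn' (.inl hr)).elim
  · exact (hn' (.inr (.inl hr))).elim
  · by_cases hzT : z ∈ T
    · exact (hn' (.inr (.inr (.inl ⟨z, hzT, haz, hbz⟩)))).elim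
    · exact ⟨z, hz, hzT, .inr (csepGraph_adj_of_cdagEdge hE ha hz haz)⟩
  · exact (hn' (.inr (.inr (.inr hr)))).elim

end CSepGraph

theorem csepGraph_adj_of_csep {p : ℕ} {E : Fin p → Fin p → Prop} (hE : ∀ i, ¬ E i i)
    {A B C D : Set (CNode p)} (h1 : CSep E A B (C ∪ D)) {x a b : CNode p} (hx : x ∈ A)
    (q : (CSepGraph E (Ancestors (cdagEdge E) (A ∪ B ∪ (C ∪ D)))).Walk x a)
    (hq : ∀ v ∈ q.support, v ∉ C ∪ D)
    (hab : (CSepGraph E (Ancestors (cdagEdge E) (A ∪ B ∪ (C ∪ D)))).Adj a b) :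
    (CSepGraph E (Ancestors (cdagEdge E) (A ∪ D ∪ C))).Adj a b := by
  by_contra hn
  obtain ⟨u, ⟨s, hs, hus⟩, huT, hau⟩ := exists_escape_of_adj_of_not_adj hE hab hn
  have hsB : s ∈ B := by
    by_contra hsB
    exact huT ⟨s, by simp only [Set.mem_union] at hs ⊢; tauto, hus⟩
  have hCD : C ∪ D ⊆ Ancestors (cdagEdge E) (A ∪ D ∪ C) := fun v hv =>
    subset_ancestors _ (by simp only [Set.mem_union] at hv ⊢; tauto)
  obtain ⟨r, hr⟩ := exists_csepGraph_walk_of_reflTransGen hE hus hs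
  have hrCD : ∀ v ∈ r.support, v ∉ C ∪ D := fun v hv hvCD =>
    huT (mem_ancestors_of_reflTransGen (hr v hv) (hCD hvCD))
  obtain ⟨l, hl⟩ : ∃ l : (CSepGraph E _).Walk a u, ∀ v ∈ l.support, v ∉ C ∪ D := by
    rcases hau with rfl | hau
    · exact ⟨.nil, by simpa using hq _ q.end_mem_support⟩
    · refine ⟨.cons hau .nil, ?_⟩
      simp only [Walk.support_cons, Walk.support_nil, List.mem_cons,
        List.not_mem_nil, or_false, forall_eq_or_imp, forall_eq]
      exact ⟨hq _ q.end_mem_support, fun hu => huT (hCD hu)⟩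
  obtain ⟨c, hc, hcw⟩ := h1 x hx s hsB (q.append (l.append r))
  simp only [Walk.mem_support_append_iff] at hcw
  rcases hcw with hcw | hcw | hcw
  exacts [hq c hcw hc, hl c hcw hc, hrCD c hcw hc]

theorem csep_contraction_general {p : ℕ} (E : Fin p -> Fin p -> Prop)
    (hacyc : ∀ v, ¬ Relation.TransGen E v v) (A B C D : Set (CNode p))
    (hAC : Disjoint A C) (hAD : Disjoint A D)
    (h1 : CSep E A B (C ∪ D)) (h2 : CSep E A D C) :
    CSep E A (B ∪ D) C := by
  have hE : ∀ i, ¬ E i i := fun i h => hacyc i (.single h)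
  have hT : A ∪ D ∪ C ⊆ A ∪ B ∪ (C ∪ D) := by
    intro v
    simp only [Set.mem_union]
    tauto
  have hunion : A ∪ B ∪ (C ∪ D) = A ∪ (B ∪ D) ∪ C := by
    ext v
    simp only [Set.mem_union]
    tauto
  unfold CSep
  rw [← hunion]
  exact Separates.contraction_of_le (csepGraph_mono (ancestors_mono hT)) hAC hAD h1 h2
    fun _ hx _ _ q hq hab => csepGraph_adj_of_csep hE h1 hx q hq hab

theorem csep_contraction {p : ℕ} (E : Fin p -> Fin p -> Prop)
    (hacyc : ∀ v, ¬ Relation.TransGen E v v) (A B C D : Set (CNode p))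
    (hAB : Disjoint A B) (hAC : Disjoint A C) (hAD : Disjoint A D)
    (hBC : Disjoint B C) (hBD : Disjoint B D) (hCD : Disjoint C D)
    (h1 : CSep E A B (C ∪ D)) (h2 : CSep E A D C) :
    CSep E A (B ∪ D) C :=
  csep_contraction_general E hacyc A B C D hAC hAD h1 h2
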